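/- Let (f_n) be the integer sequence defined by f_0 = 0, f_1 = 1 and f_n = Σ_{i=1}^{n−1} (2^i C_i − f_i) f_{n−i} for n ≥ 2, where C_i = (1/i)·binomial(2i−2, i−1). Then for every real x with 0 ≤ x < 1/8, Σ_{n≥1} f_n x^n = (−1 − √(1 − 8x) + √(2 + 2√(1 − 8x) + 8x)) / 4. -/

import Mathlib

/-!
Write `A(x) = ∑ 2ⁿ Cₙ xⁿ`. The Catalan convolution gives `A = A² + 2x`, and `A < 1/2` on
`[0, 1/8)` by continuity (`A(0) = 0`, and `A = 1/2` would force `x = 1/8`), so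
`A = (1 - √(1 - 8x)) / 2`. By induction the recurrence keeps `0 ≤ fₙ ≤ 2ⁿ Cₙ`, so
`F = ∑ fₙ xⁿ` converges absolutely and the recurrence, read as a Cauchy product, says
`F = x + (A - F) F`. With `s = √(1 - 8x)` this is `(4F + 1 + s)² = 2 + 2s + 8x`, and
`4F + 1 + s ≥ 0` picks the root.
-/

/-- The Catalan number `C n = (1/n) * binomial (2n-2) (n-1)` (the division is exact;
`C 0 = 0`). -/
def catalanC (n : ℕ) : ℕ := (2 * n - 2).choose (n - 1) / n

open Finset

theorem catalanC_succ (n : ℕ) : catalanC (n + 1) = catalan n := by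
  have h : 2 * (n + 1) - 2 = 2 * n := by omega
  rw [catalanC, h, Nat.add_sub_cancel, ← Nat.centralBinom_eq_two_mul_choose,
    ← succ_mul_catalan_eq_centralBinom, Nat.mul_div_cancel_left _ n.succ_pos]

theorem catalan_le_four_pow (n : ℕ) : catalan n ≤ 4 ^ n :=
  calc catalan n ≤ (n + 1) * catalan n := Nat.le_mul_of_pos_left _ n.succ_pos
    _ = n.centralBinom := succ_mul_catalan_eq_centralBinom n
    _ ≤ 4 ^ n := Nat.centralBinom_le_four_pow n

theorem sum_range_succ_mul_eq_sum_Icc {R : Type*} [NonUnitalNonAssocSemiring R] {p q : ℕ → R}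
    (hp0 : p 0 = 0) (hq0 : q 0 = 0) (n : ℕ) :
    ∑ k ∈ range (n + 1), p k * q (n - k) = ∑ i ∈ Icc 1 (n - 1), p i * q (n - i) := by
  refine (sum_subset (fun k hk => ?_) fun k hk hk' => ?_).symm
  · simp only [mem_Icc, mem_range] at hk ⊢; omega
  · simp only [mem_Icc, mem_range] at hk hk'
    rcases Nat.eq_zero_or_pos k with rfl | hpos
    · rw [hp0, zero_mul]
    · rw [show n - k = 0 by omega, hq0, mul_zero]

theorem hasSum_of_eq_sum_Icc_mul {R : Type*} [NormedCommRing R] [CompleteSpace R]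
    {p q u : ℕ → R} {x : R} (hp0 : p 0 = 0) (hq0 : q 0 = 0)
    (hp : Summable fun n => ‖p n * x ^ n‖) (hq : Summable fun n => ‖q n * x ^ n‖)
    (hu0 : u 0 = 0) (hu : ∀ n, 2 ≤ n → u n = ∑ i ∈ Icc 1 (n - 1), p i * q (n - i)) :
    HasSum (fun n => u n * x ^ n) (u 1 * x + (∑' n, p n * x ^ n) * ∑' n, q n * x ^ n) := by
  convert (hasSum_ite_eq 1 (u 1 * x)).add (hasSum_sum_range_mul_of_summable_norm hp hq) using 1
  funext n
  have hprod : ∑ k ∈ range (n + 1), p k * x ^ k * (q (n - k) * x ^ (n - k))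
      = (∑ i ∈ Icc 1 (n - 1), p i * q (n - i)) * x ^ n := by
    rw [← sum_range_succ_mul_eq_sum_Icc hp0 hq0, sum_mul]
    refine sum_congr rfl fun k hk => ?_
    rw [mul_mul_mul_comm, ← pow_add, Nat.add_sub_of_le (mem_range_succ_iff.mp hk)]
  rw [hprod]
  match n with
  | 0 => simp [hu0]
  | 1 => simp
  | m + 2 => rw [hu (m + 2) (by omega), if_neg (by omega), zero_add]

theorem summable_norm_mul_pow_of_abs_le {p : ℕ → ℝ} {r x : ℝ} (hp : ∀ n, |p n| ≤ r ^ n)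
    (hrx : r * |x| < 1) : Summable fun n => ‖p n * x ^ n‖ := by
  have hr : 0 ≤ r := by simpa using (abs_nonneg _).trans (hp 1)
  refine (summable_geometric_of_lt_one (by positivity) hrx).of_nonneg_of_le
    (fun n => norm_nonneg _) fun n => ?_
  rw [norm_mul, norm_pow, Real.norm_eq_abs, Real.norm_eq_abs, mul_pow]
  exact mul_le_mul_of_nonneg_right (hp n) (by positivity)

noncomputable def twoPowCatalan (n : ℕ) : ℝ := 2 ^ n * catalanC n

theorem twoPowCatalan_zero : twoPowCatalan 0 = 0 := by simp [twoPowCatalan, catalanC]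

theorem twoPowCatalan_one : twoPowCatalan 1 = 2 := by
  simp [twoPowCatalan, catalanC_succ 0]

theorem twoPowCatalan_nonneg (n : ℕ) : 0 ≤ twoPowCatalan n := by
  unfold twoPowCatalan; positivity

theorem twoPowCatalan_le_eight_pow (n : ℕ) : twoPowCatalan n ≤ 8 ^ n := by
  cases n with
  | zero => simp [twoPowCatalan_zero]
  | succ n =>
    have h : (catalan n : ℝ) ≤ 4 ^ n := by exact_mod_cast catalan_le_four_pow n
    calc twoPowCatalan (n + 1) = 2 ^ (n + 1) * catalan n := by rw [twoPowCatalan, catalanC_succ]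
      _ ≤ 2 ^ (n + 1) * 4 ^ n := by gcongr
      _ = 2 * 8 ^ n := by rw [pow_succ, show (8 : ℝ) = 2 * 4 by norm_num, mul_pow]; ring
      _ ≤ 8 ^ (n + 1) := by rw [pow_succ']; gcongr; norm_num

theorem abs_twoPowCatalan_le (n : ℕ) : |twoPowCatalan n| ≤ 8 ^ n := by
  rw [abs_of_nonneg (twoPowCatalan_nonneg n)]; exact twoPowCatalan_le_eight_pow n

theorem twoPowCatalan_eq_sum {n : ℕ} (hn : 2 ≤ n) :
    twoPowCatalan n = ∑ i ∈ Icc 1 (n - 1), twoPowCatalan i * twoPowCatalan (n - i) := by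
  obtain ⟨m, rfl⟩ : ∃ m, n = m + 2 := ⟨n - 2, by omega⟩
  rw [show m + 2 - 1 = m + 1 by omega, ← Ico_add_one_right_eq_Icc, sum_Ico_eq_sum_range,
    Nat.add_sub_cancel, twoPowCatalan, catalanC_succ, catalan_succ, Nat.cast_sum,
    ← Fin.sum_univ_eq_sum_range (fun k => twoPowCatalan (1 + k) * twoPowCatalan (m + 2 - (1 + k))),
    mul_sum]
  refine sum_congr rfl fun k _ => ?_
  have hk := k.isLt
  rw [show 1 + (k : ℕ) = k + 1 by omega, show m + 2 - (k + 1) = m - k + 1 by omega,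
    twoPowCatalan, twoPowCatalan, catalanC_succ, catalanC_succ,
    show m + 2 = (k + 1) + (m - k + 1) by omega, pow_add]
  push_cast; ring

noncomputable def catalanGF (x : ℝ) : ℝ := ∑' n, twoPowCatalan n * x ^ n

theorem summable_norm_twoPowCatalan_mul_pow {x : ℝ} (hx : 8 * |x| < 1) :
    Summable fun n => ‖twoPowCatalan n * x ^ n‖ :=
  summable_norm_mul_pow_of_abs_le abs_twoPowCatalan_le hx

theorem catalanGF_sq {x : ℝ} (hx : 8 * |x| < 1) : catalanGF x ^ 2 = catalanGF x - 2 * x := by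
  have hs := summable_norm_twoPowCatalan_mul_pow hx
  have h := hasSum_of_eq_sum_Icc_mul twoPowCatalan_zero twoPowCatalan_zero hs hs
    twoPowCatalan_zero fun n hn => twoPowCatalan_eq_sum hn
  rw [twoPowCatalan_one] at h
  unfold catalanGF
  linear_combination h.unique hs.of_norm.hasSum

theorem continuousOn_catalanGF {x : ℝ} (hx0 : 0 ≤ x) (hx : x < 1 / 8) :
    ContinuousOn catalanGF (Set.Icc 0 x) := by
  refine continuousOn_tsum (u := fun n => (8 * x) ^ n)
    (fun n => (continuous_const.mul (continuous_pow n)).continuousOn)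
    (summable_geometric_of_lt_one (by positivity) (by linarith)) fun n y ⟨hy0, hyx⟩ => ?_
  rw [norm_mul, norm_pow, Real.norm_of_nonneg (twoPowCatalan_nonneg n), Real.norm_of_nonneg hy0,
    mul_pow]
  gcongr
  exact twoPowCatalan_le_eight_pow n

theorem catalanGF_lt_half {x : ℝ} (hx0 : 0 ≤ x) (hx : x < 1 / 8) : catalanGF x < 1 / 2 := by
  by_contra! hge
  have hzero : catalanGF 0 = 0 := by simp [catalanGF, zero_pow_eq, twoPowCatalan_zero]
  obtain ⟨y, ⟨hy0, hyx⟩, hy⟩ := intermediate_value_Icc hx0 (continuousOn_catalanGF hx0 hx)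
    (show (1 / 2 : ℝ) ∈ Set.Icc (catalanGF 0) (catalanGF x) from ⟨by rw [hzero]; norm_num, hge⟩)
  have := catalanGF_sq (x := y) (by rw [abs_of_nonneg hy0]; linarith)
  rw [hy] at this
  linarith

theorem catalanGF_eq {x : ℝ} (hx0 : 0 ≤ x) (hx : x < 1 / 8) :
    catalanGF x = (1 - √(1 - 8 * x)) / 2 := by
  have hsq : (1 - 2 * catalanGF x) ^ 2 = 1 - 8 * x := by
    linear_combination 4 * catalanGF_sq (x := x) (by rw [abs_of_nonneg hx0]; linarith)
  rw [← hsq, Real.sqrt_sq (by linarith [catalanGF_lt_half hx0 hx])]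
  ring

theorem nonneg_and_le_twoPowCatalan {u : ℕ → ℝ} (hu0 : u 0 = 0) (hu1 : 0 ≤ u 1)
    (hu1' : u 1 ≤ twoPowCatalan 1)
    (hu : ∀ n, 2 ≤ n → u n = ∑ i ∈ Icc 1 (n - 1), (twoPowCatalan i - u i) * u (n - i)) (n : ℕ) :
    0 ≤ u n ∧ u n ≤ twoPowCatalan n := by
  induction n using Nat.strong_induction_on with
  | _ n ih =>
    match n with
    | 0 => simp [hu0, twoPowCatalan_zero]
    | 1 => exact ⟨hu1, hu1'⟩
    | m + 2 =>
      have hterm : ∀ i ∈ Icc 1 (m + 2 - 1), 0 ≤ (twoPowCatalan i - u i) * u (m + 2 - i) ∧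
          (twoPowCatalan i - u i) * u (m + 2 - i) ≤ twoPowCatalan i * twoPowCatalan (m + 2 - i) := by
        intro i hi
        rw [mem_Icc] at hi
        obtain ⟨hi0, hit⟩ := ih i (by omega)
        obtain ⟨hj0, hjt⟩ := ih (m + 2 - i) (by omega)
        exact ⟨mul_nonneg (by linarith) hj0,
          mul_le_mul (by linarith) hjt hj0 (twoPowCatalan_nonneg i)⟩
      rw [hu _ (by omega), twoPowCatalan_eq_sum (by omega)]
      exact ⟨sum_nonneg fun i hi => (hterm i hi).1, sum_le_sum fun i hi => (hterm i hi).2⟩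

theorem eq_closed_form_of_quadratic {F s x : ℝ} (hF : 0 ≤ F) (hs : 0 ≤ s)
    (hs2 : s ^ 2 = 1 - 8 * x) (h : F = x + ((1 - s) / 2 - F) * F) :
    F = (-1 - s + √(2 + 2 * s + 8 * x)) / 4 := by
  have hsq : (4 * F + 1 + s) ^ 2 = 2 + 2 * s + 8 * x := by linear_combination 16 * h + hs2
  rw [← hsq, Real.sqrt_sq (by positivity)]
  ring

/-- For `0 ≤ x < 1/8`,
`Σ_{n≥1} f n x^n = (-1 - √(1-8x) + √(2 + 2√(1-8x) + 8x)) / 4`.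
(The `n = 0` term below is `0`.) -/
theorem genfun_F_closed_form (f : ℕ → ℤ) (hf0 : f 0 = 0) (hf1 : f 1 = 1)
    (hf : ∀ n : ℕ, 2 ≤ n →
      f n = ∑ i ∈ Finset.Icc 1 (n - 1),
        ((2 : ℤ) ^ i * catalanC i - f i) * f (n - i))
    (x : ℝ) (hx0 : 0 ≤ x) (hx : x < 1 / 8) :
    HasSum (fun n : ℕ => (f n : ℝ) * x ^ n)
      ((-1 - Real.sqrt (1 - 8 * x) +
        Real.sqrt (2 + 2 * Real.sqrt (1 - 8 * x) + 8 * x)) / 4) := by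
  set u : ℕ → ℝ := fun n => f n
  have hu0 : u 0 = 0 := by simp [u, hf0]
  have hu1 : u 1 = 1 := by simp [u, hf1]
  have hrec (n : ℕ) (hn : 2 ≤ n) :
      u n = ∑ i ∈ Icc 1 (n - 1), (twoPowCatalan i - u i) * u (n - i) := by
    simp only [u, hf n hn, twoPowCatalan]; push_cast; rfl
  have hbound := nonneg_and_le_twoPowCatalan hu0 (by rw [hu1]; norm_num)
    (by rw [hu1, twoPowCatalan_one]; norm_num) hrec
  have h8x : 8 * |x| < 1 := by rw [abs_of_nonneg hx0]; linarith
  have hle (n : ℕ) : |u n| ≤ 8 ^ n ∧ |twoPowCatalan n - u n| ≤ 8 ^ n := by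
    obtain ⟨hn0, hnt⟩ := hbound n
    have := twoPowCatalan_le_eight_pow n
    rw [abs_of_nonneg hn0, abs_of_nonneg (by linarith)]
    constructor <;> linarith
  have hus := summable_norm_mul_pow_of_abs_le (fun n => (hle n).1) h8x
  have hvs := summable_norm_mul_pow_of_abs_le (fun n => (hle n).2) h8x
  have hF := hasSum_of_eq_sum_Icc_mul (by simp [hu0, twoPowCatalan_zero]) hu0 hvs hus hu0 hrec
  have hdiff : ∑' n, (twoPowCatalan n - u n) * x ^ n = catalanGF x - ∑' n, u n * x ^ n := by
    simp_rw [sub_mul]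
    exact (summable_norm_twoPowCatalan_mul_pow h8x).of_norm.tsum_sub hus.of_norm
  rw [hdiff, catalanGF_eq hx0 hx, hu1, one_mul] at hF
  rw [← eq_closed_form_of_quadratic (tsum_nonneg fun n => mul_nonneg (hbound n).1 (by positivity))
    (Real.sqrt_nonneg _) (Real.sq_sqrt (by linarith)) (hF.unique hus.of_norm.hasSum).symm]
  exact hus.of_norm.hasSum
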